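/- Let S = {arg(α) : α ∈ ℂ, P₅(α) = 0} be the set of principal arguments of the complex roots of P₅(T) = T⁸ − T⁷ + 2T⁶ − 4T⁵ + 16T⁴ − 20T³ + 50T² − 125T + 625. Then the ℚ-vector subspace of ℝ spanned by S ∪ {π} has dimension at most 4. (Equivalently, the angle rank of the corresponding isogeny class 4.5.ab_c_ae_q is at most 3, so it is not maximal.) -/

import Mathlib

/-!
Every root of `P5` is `α` or `ᾱ` with `α² - u α + 5 = 0`, where `u` runs over the four real roots
`u₁ < u₂ < u₃ < u₄` of the real Weil polynomial `x⁴ - x³ - 18x² + 11x + 46`; so the arguments of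
the roots are `±θⱼ` with `θⱼ = arg αⱼ`, `αⱼ = (uⱼ + i√(20 - uⱼ²))/2`. The point is the
multiplicative relation `α₁α₄ = α₂α₃` (up to conjugation, which is all we need): it gives
`θ₄ ≡ ±(θ₂ + θ₃) - θ₁ (mod 2π)`, so every argument lies in the `ℚ`-span of `θ₁, θ₂, θ₃, π`.
Since `|α₁α₄| = |α₂α₃| = 5`, the relation amounts to `Re (α₁α₄) = Re (α₂α₃)`. For any two
distinct roots `u, v`, one of `2 Re (α_u α_v)`, `2 Re (α_u ᾱ_v)` is a root of
`r³ + r² - 80r + 75`; interval bounds on the `uⱼ` show that for the pairs `{1, 4}` and `{2, 3}` it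
is the first one, and both are negative, hence equal to the unique negative root of the cubic.
-/

open Polynomial

/-- The Weil polynomial of the Jacobian of `y² = x⁹ + x⁶ + 2x⁵ + x` over `𝔽₅`. -/
noncomputable def P5 : Polynomial ℂ :=
  X ^ 8 - X ^ 7 + 2 * X ^ 6 - 4 * X ^ 5 + 16 * X ^ 4 - 20 * X ^ 3 + 50 * X ^ 2 - 125 * X + 625

open Complex ComplexConjugate Real Submodule

theorem Finset.card_eq_four_of_lt {α : Type*} [LinearOrder α] {a b c d : α} (hab : a < b)
    (hbc : b < c) (hcd : c < d) : ({a, b, c, d} : Finset α).card = 4 := by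
  rw [card_insert_of_notMem, card_insert_of_notMem, card_pair hcd.ne]
  · simp only [mem_insert, mem_singleton, not_or]
    exact ⟨hbc.ne, (hbc.trans hcd).ne⟩
  · simp only [mem_insert, mem_singleton, not_or]
    exact ⟨hab.ne, (hab.trans hbc).ne, (hab.trans (hbc.trans hcd)).ne⟩

theorem Polynomial.mem_of_isRoot_of_card_eq_natDegree {R : Type*} [CommRing R] [IsDomain R]
    [DecidableEq R] {p : R[X]} (hp : p ≠ 0) {s : Finset R} (hs : ∀ x ∈ s, p.IsRoot x)
    (hcard : s.card = p.natDegree) {y : R} (hy : p.IsRoot y) : y ∈ s := by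
  by_contra hys
  have hsub : (insert y s).val ⊆ p.roots := by
    intro x hx
    rw [mem_roots hp]
    rcases Finset.mem_insert.mp hx with rfl | hx
    exacts [hy, hs x hx]
  have := card_le_degree_of_subset_roots hsub
  rw [Finset.card_insert_of_notMem hys] at this
  omega

theorem Polynomial.exists_isRoot_mem_Icc {p : ℝ[X]} {a b : ℝ} (hab : a ≤ b)
    (h : p.eval a * p.eval b ≤ 0) : ∃ x ∈ Set.Icc a b, p.IsRoot x := by
  have h0 : (0 : ℝ) ∈ Set.uIcc (p.eval a) (p.eval b) :=
    Set.mem_uIcc.2 ((mul_nonpos_iff.1 h).symm.imp id And.symm)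
  obtain ⟨x, hx, hx0⟩ := intermediate_value_uIcc p.continuous.continuousOn h0
  exact ⟨x, Set.uIcc_of_le hab ▸ hx, hx0⟩

theorem mem_of_coe_angle_eq {S : Submodule ℚ ℝ} (hπ : π ∈ S) {x y : ℝ} (hy : y ∈ S)
    (h : (x : Real.Angle) = y) : x ∈ S := by
  obtain ⟨k, hk⟩ := Real.Angle.angle_eq_iff_two_pi_dvd_sub.1 h
  have hx : x = y + (2 * k : ℤ) • π := by rw [zsmul_eq_mul]; push_cast; linarith
  exact hx ▸ S.add_mem hy (S.toAddSubgroup.zsmul_mem hπ _)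

theorem Complex.eq_or_eq_conj_of_re_eq_of_normSq_eq {z w : ℂ} (hre : z.re = w.re)
    (hn : normSq z = normSq w) : z = w ∨ z = conj w := by
  have him : z.im ^ 2 = w.im ^ 2 := by
    rw [normSq_apply, normSq_apply, hre] at hn; linarith
  rcases sq_eq_sq_iff_eq_or_eq_neg.1 him with h | h
  · exact Or.inl (Complex.ext hre h)
  · exact Or.inr (Complex.ext (by simpa using hre) (by simpa using h))

/-- The root of `z² - u z + q` in the closed upper half-plane, when `u² ≤ 4q`. -/
noncomputable def upperRoot (q u : ℝ) : ℂ := ⟨u / 2, √(4 * q - u ^ 2) / 2⟩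

section upperRoot

variable {q u : ℝ}

theorem normSq_upperRoot (hu : u ^ 2 ≤ 4 * q) : normSq (upperRoot q u) = q := by
  rw [upperRoot, normSq_mk]
  nlinarith [Real.sq_sqrt (sub_nonneg.2 hu)]

theorem upperRoot_ne_zero (hq : 0 < q) (hu : u ^ 2 ≤ 4 * q) : upperRoot q u ≠ 0 := by
  rw [← normSq_pos, normSq_upperRoot hu]
  exact hq

theorem eq_upperRoot_or_eq_conj (hu : u ^ 2 ≤ 4 * q) {z : ℂ} (hz : z ^ 2 - u * z + q = 0) :
    z = upperRoot q u ∨ z = conj (upperRoot q u) := by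
  have hsum : upperRoot q u + conj (upperRoot q u) = u := by
    apply Complex.ext <;> simp [upperRoot]
  have hprod := mul_conj (upperRoot q u)
  rw [normSq_upperRoot hu] at hprod
  have hfac : (z - upperRoot q u) * (z - conj (upperRoot q u)) = 0 := by
    linear_combination hz - z * hsum + hprod
  exact (mul_eq_zero.1 hfac).imp sub_eq_zero.1 sub_eq_zero.1

theorem sq_sqrt_mul_sqrt {v : ℝ} (hu : u ^ 2 ≤ 4 * q) (hv : v ^ 2 ≤ 4 * q) :
    (√(4 * q - u ^ 2) * √(4 * q - v ^ 2)) ^ 2 = (4 * q - u ^ 2) * (4 * q - v ^ 2) := by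
  rw [mul_pow, Real.sq_sqrt (by linarith), Real.sq_sqrt (by linarith)]

end upperRoot

theorem two_mul_re_upperRoot_mul (q u v : ℝ) :
    2 * (upperRoot q u * upperRoot q v).re =
      (u * v - √(4 * q - u ^ 2) * √(4 * q - v ^ 2)) / 2 := by
  simp only [upperRoot, mul_re]
  ring

theorem two_mul_re_upperRoot_mul_conj (q u v : ℝ) :
    2 * (upperRoot q u * conj (upperRoot q v)).re =
      (u * v + √(4 * q - u ^ 2) * √(4 * q - v ^ 2)) / 2 := by
  simp only [upperRoot, mul_re, conj_re, conj_im]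
  ring

theorem re_upperRoot_mul_neg (q : ℝ) {u v : ℝ} (hu : u < 0) (hv : 0 < v) :
    (upperRoot q u * upperRoot q v).re < 0 := by
  have hre := two_mul_re_upperRoot_mul q u v
  nlinarith [mul_neg_of_neg_of_pos hu hv, mul_nonneg (Real.sqrt_nonneg (4 * q - u ^ 2))
    (Real.sqrt_nonneg (4 * q - v ^ 2))]

theorem arg_mem_of_sq_sub_mul_add_eq_zero {S : Submodule ℚ ℝ} (hπ : π ∈ S) {q u : ℝ}
    (hu : u ^ 2 ≤ 4 * q) (hS : arg (upperRoot q u) ∈ S) {z : ℂ}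
    (hz : z ^ 2 - u * z + q = 0) : arg z ∈ S := by
  rcases eq_upperRoot_or_eq_conj hu hz with rfl | rfl
  · exact hS
  · exact mem_of_coe_angle_eq hπ (S.neg_mem hS) (by rw [arg_conj_coe_angle, Real.Angle.coe_neg])

theorem arg_mem_of_mul_eq_or_eq_conj {S : Submodule ℚ ℝ} (hπ : π ∈ S) {a b c d : ℂ}
    (ha : a ≠ 0) (hb : b ≠ 0) (hc : c ≠ 0) (hd : d ≠ 0)
    (haS : arg a ∈ S) (hcS : arg c ∈ S) (hdS : arg d ∈ S)
    (h : a * b = c * d ∨ a * b = conj (c * d)) : arg b ∈ S := by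
  have hab := arg_mul_coe_angle ha hb
  have hcd := arg_mul_coe_angle hc hd
  rcases h with h | h
  · refine mem_of_coe_angle_eq hπ (S.sub_mem (S.add_mem hcS hdS) haS) ?_
    rw [h, hcd] at hab
    rw [Real.Angle.coe_sub, Real.Angle.coe_add, hab]
    abel
  · refine mem_of_coe_angle_eq hπ (S.sub_mem (S.neg_mem (S.add_mem hcS hdS)) haS) ?_
    rw [h, arg_conj_coe_angle, hcd] at hab
    rw [Real.Angle.coe_sub, Real.Angle.coe_neg, Real.Angle.coe_add, hab]
    abel

noncomputable def P5Real : ℝ[X] := X ^ 4 - X ^ 3 - 18 * X ^ 2 + 11 * X + 46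

theorem natDegree_P5Real : P5Real.natDegree = 4 := by
  unfold P5Real
  compute_degree!

theorem eval_P5 {α : ℂ} (hα : α ≠ 0) :
    P5.eval α = α ^ 4 * (P5Real.map (algebraMap ℝ ℂ)).eval (α + 5 / α) := by
  simp [P5, P5Real]
  field_simp
  ring

theorem exists_sq_sub_mul_add_eq_zero {s : Finset ℝ} (hs : ∀ u ∈ s, P5Real.IsRoot u)
    (hcard : s.card = 4) {α : ℂ} (hα : P5.eval α = 0) : ∃ u ∈ s, α ^ 2 - u * α + 5 = 0 := by
  have hα0 : α ≠ 0 := by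
    rintro rfl
    simp [P5] at hα
  have hP : (P5Real.map (algebraMap ℝ ℂ)).IsRoot (α + 5 / α) := by
    rw [eval_P5 hα0] at hα
    exact (mul_eq_zero.1 hα).resolve_left (pow_ne_zero _ hα0)
  have hmem : α + 5 / α ∈ s.image ((↑) : ℝ → ℂ) := by
    refine mem_of_isRoot_of_card_eq_natDegree ?_ ?_ ?_ hP
    · exact map_ne_zero (ne_zero_of_natDegree_gt (n := 0) (by rw [natDegree_P5Real]; norm_num))
    · simp only [Finset.mem_image]
      rintro _ ⟨u, hu, rfl⟩
      exact (hs u hu).map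
    · rw [Finset.card_image_of_injective _ ofReal_injective, natDegree_map, natDegree_P5Real,
        hcard]
  obtain ⟨u, hu, hαu⟩ := Finset.mem_image.1 hmem
  refine ⟨u, hu, ?_⟩
  rw [hαu]
  field_simp
  ring

/-- The roots of this cubic are the common values `2 Re (α₁α₄) = 2 Re (α₂α₃)`,
`2 Re (α₁ᾱ₃) = 2 Re (α₂ᾱ₄)` and `2 Re (α₁ᾱ₂) = 2 Re (α₃ᾱ₄)`, where `αⱼ = upperRoot 5 uⱼ`. -/
def pairCubic (r : ℝ) : ℝ := r ^ 3 + r ^ 2 - 80 * r + 75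

theorem pairCubic_pos {r : ℝ} (h₁ : -9 ≤ r) (h₂ : r ≤ 0) : 0 < pairCubic r := by
  unfold pairCubic
  nlinarith [mul_nonneg (neg_nonneg.2 h₂) (show 0 ≤ 80 - r - r ^ 2 by nlinarith)]

theorem pairCubic_neg {r : ℝ} (h₁ : 1 ≤ r) (h₂ : r ≤ 39 / 5) : pairCubic r < 0 := by
  unfold pairCubic
  nlinarith [mul_nonneg (mul_nonneg (sub_nonneg.2 h₁) (sub_nonneg.2 h₂))
    (show (0 : ℝ) ≤ r + 49 / 5 by linarith)]

theorem eq_of_pairCubic_eq_zero {x y : ℝ} (hx : x < 0) (hy : y < 0) (hx0 : pairCubic x = 0)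
    (hy0 : pairCubic y = 0) : x = y := by
  have hx9 : x < -9 := by
    by_contra! h
    exact (pairCubic_pos h hx.le).ne' hx0
  have hy9 : y < -9 := by
    by_contra! h
    exact (pairCubic_pos h hy.le).ne' hy0
  have hfac : (x - y) * (x ^ 2 + x * y + y ^ 2 + x + y - 80) = 0 := by
    unfold pairCubic at hx0 hy0
    linear_combination hx0 - hy0
  have hne : x ^ 2 + x * y + y ^ 2 + x + y - 80 ≠ 0 := by nlinarith
  exact sub_eq_zero.1 ((mul_eq_zero.1 hfac).resolve_right hne)

theorem pairCubic_mul_pairCubic_eq_zero {u v : ℝ} (hu : P5Real.IsRoot u) (hv : P5Real.IsRoot v)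
    (huv : u ≠ v) (hu20 : u ^ 2 ≤ 20) (hv20 : v ^ 2 ≤ 20) :
    pairCubic (2 * (upperRoot 5 u * upperRoot 5 v).re) *
      pairCubic (2 * (upperRoot 5 u * conj (upperRoot 5 v)).re) = 0 := by
  have hu' : u ^ 4 - u ^ 3 - 18 * u ^ 2 + 11 * u + 46 = 0 := by simpa [P5Real] using hu
  have hv' : v ^ 4 - v ^ 3 - 18 * v ^ 2 + 11 * v + 46 = 0 := by simpa [P5Real] using hv
  have hdiff :
      v ^ 3 + v ^ 2 * (u - 1) + v * (u ^ 2 - u - 18) + (u ^ 3 - u ^ 2 - 18 * u + 11) = 0 := by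
    refine mul_left_cancel₀ (sub_ne_zero.2 huv) ?_
    linear_combination hu' - hv'
  have hw := sq_sqrt_mul_sqrt (q := 5) (u := u) (v := v) (by linarith) (by linarith)
  rw [two_mul_re_upperRoot_mul, two_mul_re_upperRoot_mul_conj]
  generalize √(4 * 5 - u ^ 2) * √(4 * 5 - v ^ 2) = w at hw ⊢
  unfold pairCubic
  -- `(u v ∓ w) / 2` are the roots of `r² - u v r + 5 (u² + v²) - 100`, so the product is the
  -- resultant of that quadratic with `pairCubic`, which vanishes modulo `hu'`, `hdiff` and `hw`.
  linear_combination
    ((-75/2) + (61/16)*w^2 + (-1/64)*w^4 + (195/4)*v^2 + (5/16)*v^2*w^2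
      + (-25/4)*v^4 + (405/4)*u*v + (1/16)*u*v*w^2 + (-5/4)*u*v^3 + (195/4)*u^2
      + (5/16)*u^2*w^2 + (59/16)*u^2*v^2 + (1/32)*u^2*v^2*w^2 + (-5/16)*u^2*v^4
      + (-5/4)*u^3*v + (-1/16)*u^3*v^3 + (-25/4)*u^4 + (-5/16)*u^4*v^2
      + (-1/64)*u^4*v^4) * hw
    + ((-150) + 175*v + (-25)*v^2 + 175*u + (-75)*u*v + (-25)*u^2) * hu'
    + ((-225) + (-1100)*v + 125*v^2 + 125*v^3 + (-950)*u + (-100)*u*v + (-100)*u*v^2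
      + (-50)*u^2 + (-50)*u^2*v + 150*u^3) * hdiff

theorem exists_roots_P5Real : ∃ u₁ u₂ u₃ u₄ : ℝ,
    u₁ ∈ Set.Icc (-4) (-3) ∧ u₂ ∈ Set.Icc (-2) (-1) ∧ u₃ ∈ Set.Icc 2 3 ∧
      u₄ ∈ Set.Icc 4 (447 / 100) ∧
        P5Real.IsRoot u₁ ∧ P5Real.IsRoot u₂ ∧ P5Real.IsRoot u₃ ∧ P5Real.IsRoot u₄ := by
  obtain ⟨u₁, h₁, r₁⟩ := exists_isRoot_mem_Icc (p := P5Real) (a := -4) (b := -3) (by norm_num)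
    (by norm_num [P5Real])
  obtain ⟨u₂, h₂, r₂⟩ := exists_isRoot_mem_Icc (p := P5Real) (a := -2) (b := -1) (by norm_num)
    (by norm_num [P5Real])
  obtain ⟨u₃, h₃, r₃⟩ := exists_isRoot_mem_Icc (p := P5Real) (a := 2) (b := 3) (by norm_num)
    (by norm_num [P5Real])
  obtain ⟨u₄, h₄, r₄⟩ := exists_isRoot_mem_Icc (p := P5Real) (a := 4) (b := 447 / 100)
    (by norm_num) (by norm_num [P5Real])
  exact ⟨u₁, u₂, u₃, u₄, h₁, h₂, h₃, h₄, r₁, r₂, r₃, r₄⟩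

theorem upperRoot_mul_eq_or_eq_conj {u₁ u₂ u₃ u₄ : ℝ} (h₁ : u₁ ∈ Set.Icc (-4) (-3))
    (h₂ : u₂ ∈ Set.Icc (-2) (-1)) (h₃ : u₃ ∈ Set.Icc 2 3) (h₄ : u₄ ∈ Set.Icc 4 (447 / 100))
    (r₁ : P5Real.IsRoot u₁) (r₂ : P5Real.IsRoot u₂) (r₃ : P5Real.IsRoot u₃)
    (r₄ : P5Real.IsRoot u₄) :
    upperRoot 5 u₁ * upperRoot 5 u₄ = upperRoot 5 u₂ * upperRoot 5 u₃ ∨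
      upperRoot 5 u₁ * upperRoot 5 u₄ = conj (upperRoot 5 u₂ * upperRoot 5 u₃) := by
  obtain ⟨h₁l, h₁r⟩ := h₁
  obtain ⟨h₂l, h₂r⟩ := h₂
  obtain ⟨h₃l, h₃r⟩ := h₃
  obtain ⟨h₄l, h₄r⟩ := h₄
  have hc₁₄ : pairCubic (2 * (upperRoot 5 u₁ * upperRoot 5 u₄).re) = 0 := by
    have hw := sq_sqrt_mul_sqrt (q := 5) (u := u₁) (v := u₄) (by nlinarith) (by nlinarith)
    have hw0 :=
      mul_nonneg (Real.sqrt_nonneg (4 * 5 - u₁ ^ 2)) (Real.sqrt_nonneg (4 * 5 - u₄ ^ 2))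
    refine (mul_eq_zero.1 (pairCubic_mul_pairCubic_eq_zero r₁ r₄ (by linarith) (by nlinarith)
      (by nlinarith))).resolve_right (pairCubic_pos ?_ ?_).ne' <;>
    rw [two_mul_re_upperRoot_mul_conj] <;>
    generalize √(4 * 5 - u₁ ^ 2) * √(4 * 5 - u₄ ^ 2) = w at hw hw0 ⊢
    · nlinarith
    · nlinarith [mul_nonneg (by linarith : 0 ≤ -u₁) (by linarith : (0 : ℝ) ≤ u₄)]
  have hc₂₃ : pairCubic (2 * (upperRoot 5 u₂ * upperRoot 5 u₃).re) = 0 := by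
    have hw := sq_sqrt_mul_sqrt (q := 5) (u := u₂) (v := u₃) (by nlinarith) (by nlinarith)
    have hw0 :=
      mul_nonneg (Real.sqrt_nonneg (4 * 5 - u₂ ^ 2)) (Real.sqrt_nonneg (4 * 5 - u₃ ^ 2))
    refine (mul_eq_zero.1 (pairCubic_mul_pairCubic_eq_zero r₂ r₃ (by linarith) (by nlinarith)
      (by nlinarith))).resolve_right (pairCubic_neg ?_ ?_).ne <;>
    rw [two_mul_re_upperRoot_mul_conj] <;>
    generalize √(4 * 5 - u₂ ^ 2) * √(4 * 5 - u₃ ^ 2) = w at hw hw0 ⊢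
    · nlinarith
    · have hw304 : w ^ 2 ≤ 304 := by
        rw [hw]
        nlinarith [mul_nonneg (by nlinarith : (0 : ℝ) ≤ 19 - (4 * 5 - u₂ ^ 2))
          (by nlinarith : (0 : ℝ) ≤ 4 * 5 - u₃ ^ 2)]
      nlinarith [mul_nonneg (by linarith : (0 : ℝ) ≤ -1 - u₂) (by linarith : (0 : ℝ) ≤ u₃)]
  have hre : (upperRoot 5 u₁ * upperRoot 5 u₄).re = (upperRoot 5 u₂ * upperRoot 5 u₃).re := by
    have h₁₄ := re_upperRoot_mul_neg 5 (by linarith : u₁ < 0) (by linarith : (0 : ℝ) < u₄)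
    have h₂₃ := re_upperRoot_mul_neg 5 (by linarith : u₂ < 0) (by linarith : (0 : ℝ) < u₃)
    linarith [eq_of_pairCubic_eq_zero (by linarith) (by linarith) hc₁₄ hc₂₃]
  refine eq_or_eq_conj_of_re_eq_of_normSq_eq hre ?_
  simp only [normSq_mul]
  rw [normSq_upperRoot, normSq_upperRoot, normSq_upperRoot, normSq_upperRoot] <;> nlinarith

theorem arg_upperRoot_mem_span {u₁ u₂ u₃ u₄ : ℝ} (h₁ : u₁ ∈ Set.Icc (-4) (-3))
    (h₂ : u₂ ∈ Set.Icc (-2) (-1)) (h₃ : u₃ ∈ Set.Icc 2 3) (h₄ : u₄ ∈ Set.Icc 4 (447 / 100))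
    (r₁ : P5Real.IsRoot u₁) (r₂ : P5Real.IsRoot u₂) (r₃ : P5Real.IsRoot u₃)
    (r₄ : P5Real.IsRoot u₄) {S : Submodule ℚ ℝ} (hπ : π ∈ S) (hS₁ : arg (upperRoot 5 u₁) ∈ S)
    (hS₂ : arg (upperRoot 5 u₂) ∈ S) (hS₃ : arg (upperRoot 5 u₃) ∈ S) :
    arg (upperRoot 5 u₄) ∈ S := by
  have hne : ∀ u ∈ Set.Icc (-4 : ℝ) (447 / 100), upperRoot 5 u ≠ 0 := fun u hu =>
    upperRoot_ne_zero (by norm_num) (by nlinarith [hu.1, hu.2])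
  exact arg_mem_of_mul_eq_or_eq_conj hπ
    (hne u₁ ⟨h₁.1, by linarith [h₁.2]⟩) (hne u₄ ⟨by linarith [h₄.1], h₄.2⟩)
    (hne u₂ ⟨by linarith [h₂.1], by linarith [h₂.2]⟩)
    (hne u₃ ⟨by linarith [h₃.1], by linarith [h₃.2]⟩)
    hS₁ hS₂ hS₃ (upperRoot_mul_eq_or_eq_conj h₁ h₂ h₃ h₄ r₁ r₂ r₃ r₄)

/-- The `ℚ`-vector subspace of `ℝ` spanned by the principal arguments of the complex roots of
`P₅` together with `π` has dimension at most `4` (i.e., the angle rank of the isogeny class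
`4.5.ab_c_ae_q` is at most `3`, hence not maximal). -/
theorem P5_angle_rank_le_three :
    Module.rank ℚ
      (Submodule.span ℚ ({x : ℝ | ∃ α : ℂ, P5.eval α = 0 ∧ Complex.arg α = x} ∪ {Real.pi}))
      ≤ 4 := by
  obtain ⟨u₁, u₂, u₃, u₄, h₁, h₂, h₃, h₄, r₁, r₂, r₃, r₄⟩ := exists_roots_P5Real
  set S := span ℚ (({arg (upperRoot 5 u₁), arg (upperRoot 5 u₂), arg (upperRoot 5 u₃), π} :
    Finset ℝ) : Set ℝ)
  have hπ : π ∈ S := subset_span (by simp)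
  have hS₁ : arg (upperRoot 5 u₁) ∈ S := subset_span (by simp)
  have hS₂ : arg (upperRoot 5 u₂) ∈ S := subset_span (by simp)
  have hS₃ : arg (upperRoot 5 u₃) ∈ S := subset_span (by simp)
  have hS₄ := arg_upperRoot_mem_span h₁ h₂ h₃ h₄ r₁ r₂ r₃ r₄ hπ hS₁ hS₂ hS₃
  have hspan : span ℚ ({x : ℝ | ∃ α : ℂ, P5.eval α = 0 ∧ arg α = x} ∪ {π}) ≤ S := by
    refine span_le.2 (Set.union_subset ?_ (Set.singleton_subset_iff.2 hπ))
    rintro _ ⟨α, hα, rfl⟩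
    obtain ⟨u, hu, hαu⟩ := exists_sq_sub_mul_add_eq_zero (s := {u₁, u₂, u₃, u₄})
      (by simpa only [Finset.forall_mem_insert, Finset.mem_singleton, forall_eq]
        using ⟨r₁, r₂, r₃, r₄⟩)
      (Finset.card_eq_four_of_lt (by linarith [h₁.2, h₂.1]) (by linarith [h₂.2, h₃.1])
        (by linarith [h₃.2, h₄.1])) hα
    simp only [Finset.mem_insert, Finset.mem_singleton] at hu
    rcases hu with rfl | rfl | rfl | rfl
    · exact arg_mem_of_sq_sub_mul_add_eq_zero hπ (by nlinarith [h₁.1, h₁.2]) hS₁ hαu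
    · exact arg_mem_of_sq_sub_mul_add_eq_zero hπ (by nlinarith [h₂.1, h₂.2]) hS₂ hαu
    · exact arg_mem_of_sq_sub_mul_add_eq_zero hπ (by nlinarith [h₃.1, h₃.2]) hS₃ hαu
    · exact arg_mem_of_sq_sub_mul_add_eq_zero hπ (by nlinarith [h₄.1, h₄.2]) hS₄ hαu
  calc Module.rank ℚ (span ℚ _) ≤ Module.rank ℚ S := Submodule.rank_mono hspan
    _ ≤ _ := rank_span_finset_le _
    _ ≤ 4 := by exact_mod_cast Finset.card_le_four
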